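/- For every integer n ≥ 1 and real numbers θ > 0, ρ > 0, γ ≥ 0, one has Σ_{k=1}^{n} [ C(n,k) · ∫₀¹ θ · e^{γx} · x^{k-1} · (1-x)^{n-k-1+ρ} dx ] = θ · Σ_{k=0}^{n-1} 1/(k+ρ) + θ · Σ_{m=1}^∞ (γ^m / m) · ( 1/(ρ)_m − 1/(n+ρ)_m ). (This is the expected size of the accessory genome of a sample of size n, E[G^{(n)}], from Corollary 2.) -/

import Mathlib

/-!
Since `∑_{k=1}^n C(n,k) x^{k-1} (1-x)^{n-k} = ∑_{j<n} (1-x)^j`, the left-hand side equals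
`θ ∑_{j<n} F(j+ρ)` with `F(s) = ∫₀¹ e^{γx} (1-x)^{s-1} dx`. Expanding `e^{γx}` and integrating
termwise against the Beta kernel gives `F(s) = ∑_m γ^m / (s)_{m+1}`. Finally
`1/(s)_{m+1} - 1/(s+1)_{m+1} = (m+1)/(s)_{m+2}`, so after splitting off the `m = 0` term
`1/s`, the sum over `j` of the remaining series telescopes.
-/

open Finset MeasureTheory Polynomial

/-- The real Pochhammer symbol `(a)_m = a (a+1) ⋯ (a+m-1)`. -/
noncomputable def pochR (a : ℝ) (m : ℕ) : ℝ := (ascPochhammer ℝ m).eval a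

theorem pochR_one (a : ℝ) : pochR a 1 = a := by simp [pochR]

theorem pochR_succ (a : ℝ) (m : ℕ) : pochR a (m + 1) = pochR a m * (a + m) :=
  ascPochhammer_succ_eval m a

theorem pochR_succ_left (a : ℝ) (m : ℕ) : pochR a (m + 1) = a * pochR (a + 1) m := by
  simp [pochR, ascPochhammer_succ_left, Polynomial.eval_comp]

theorem pochR_pos {a : ℝ} (ha : 0 < a) (m : ℕ) : 0 < pochR a m := ascPochhammer_pos m a ha

theorem pochR_eq_prod (a : ℝ) (m : ℕ) : pochR a m = ∏ j ∈ range m, (a + j) := by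
  induction m with
  | zero => simp [pochR]
  | succ m ih => rw [pochR_succ, prod_range_succ, ih]

theorem mul_factorial_le_pochR {a : ℝ} (ha : 0 < a) (m : ℕ) :
    a * m.factorial ≤ pochR a (m + 1) := by
  induction m with
  | zero => simp [pochR_one]
  | succ m ih =>
    rw [pochR_succ, Nat.factorial_succ, Nat.cast_mul, mul_comm ((m + 1 : ℕ) : ℝ), ← mul_assoc]
    gcongr
    · exact (pochR_pos ha _).le
    · push_cast; linarith

theorem one_div_pochR_sub_one_div_pochR_add_one {a : ℝ} (ha : 0 < a) (m : ℕ) :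
    1 / pochR a (m + 1) - 1 / pochR (a + 1) (m + 1) = (m + 1) / pochR a (m + 2) := by
  have hright : pochR a (m + 2) = pochR a (m + 1) * (a + (m + 1)) := by
    rw [pochR_succ a (m + 1)]; push_cast; rfl
  have hleft : pochR a (m + 2) = a * pochR (a + 1) (m + 1) := pochR_succ_left a (m + 1)
  have h₁ := (pochR_pos ha (m + 1)).ne'
  have h₂ := (pochR_pos (by linarith : 0 < a + 1) (m + 1)).ne'
  rw [div_sub_div _ _ h₁ h₂, div_eq_div_iff (mul_ne_zero h₁ h₂) (pochR_pos ha _).ne']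
  linear_combination pochR (a + 1) (m + 1) * hright - pochR a (m + 1) * hleft

theorem summable_pow_div_pochR (c : ℝ) {a : ℝ} (ha : 0 < a) :
    Summable fun m : ℕ => c ^ m / pochR a (m + 1) := by
  refine Summable.of_norm_bounded ((Real.summable_pow_div_factorial |c|).mul_left a⁻¹)
    fun m => ?_
  rw [norm_div, norm_pow, Real.norm_eq_abs, Real.norm_of_nonneg (pochR_pos ha _).le,
    ← mul_div_assoc, inv_mul_eq_div, div_div]
  gcongr
  exact mul_factorial_le_pochR ha m

theorem integrableOn_Ioo_mul_one_sub_rpow {φ : ℝ → ℝ} (hφ : ContinuousOn φ (Set.Icc 0 1))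
    {t : ℝ} (ht : -1 < t) : IntegrableOn (fun x => φ x * (1 - x) ^ t) (Set.Ioo 0 1) := by
  have h : IntervalIntegrable (fun x : ℝ => (1 - x) ^ t) volume 0 1 := by
    simpa using
      ((intervalIntegral.intervalIntegrable_rpow' ht (a := 0) (b := 1)).comp_sub_left 1).symm
  rw [← intervalIntegrable_iff_integrableOn_Ioo_of_le zero_le_one]
  exact h.continuousOn_mul (by rwa [Set.uIcc_of_le zero_le_one])

theorem integral_Ioo_pow_mul_one_sub_rpow (m : ℕ) {s : ℝ} (hs : 0 < s) :
    ∫ x in Set.Ioo (0 : ℝ) 1, x ^ m * (1 - x) ^ (s - 1) = m.factorial / pochR s (m + 1) := by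
  have hbeta := Complex.betaIntegral_eval_nat_add_one_right (u := s) (by simpa) m
  have hreal : Complex.betaIntegral (m + 1) s =
      ((∫ x in (0 : ℝ)..1, x ^ m * (1 - x) ^ (s - 1) : ℝ) : ℂ) := by
    rw [Complex.betaIntegral, ← intervalIntegral.integral_ofReal]
    refine intervalIntegral.integral_congr fun x hx => ?_
    rw [Set.uIcc_of_le zero_le_one] at hx
    push_cast
    rw [Complex.ofReal_cpow (by linarith [hx.2]), add_sub_cancel_right]
    norm_cast
  rw [← Complex.betaIntegral_symm, hreal] at hbeta
  rw [← integral_Ioc_eq_integral_Ioo, ← intervalIntegral.integral_of_le zero_le_one,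
    pochR_eq_prod]
  exact_mod_cast hbeta

theorem hasSum_integral_Ioo_exp_mul_one_sub_rpow (γ : ℝ) {s : ℝ} (hs : 0 < s) :
    HasSum (fun m : ℕ => γ ^ m / pochR s (m + 1))
      (∫ x in Set.Ioo (0 : ℝ) 1, Real.exp (γ * x) * (1 - x) ^ (s - 1)) := by
  let F : ℕ → ℝ → ℝ := fun m x => γ ^ m / m.factorial * (x ^ m * (1 - x) ^ (s - 1))
  have hF : ∀ (c : ℝ) (m : ℕ), ∫ x in Set.Ioo (0 : ℝ) 1,
      c ^ m / m.factorial * (x ^ m * (1 - x) ^ (s - 1)) = c ^ m / pochR s (m + 1) := by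
    intro c m
    rw [integral_const_mul, integral_Ioo_pow_mul_one_sub_rpow m hs, div_mul_div_cancel₀]
    exact_mod_cast m.factorial_ne_zero
  have hint : ∀ m, IntegrableOn (F m) (Set.Ioo 0 1) := fun m =>
    (integrableOn_Ioo_mul_one_sub_rpow (continuousOn_pow m) (by linarith)).const_mul _
  have hnorm : ∀ m, ∫ x in Set.Ioo (0 : ℝ) 1, ‖F m x‖ = |γ| ^ m / pochR s (m + 1) := by
    intro m
    rw [← hF]
    refine setIntegral_congr_fun measurableSet_Ioo fun x hx => ?_
    have h1x : 0 ≤ (1 - x) ^ (s - 1) := Real.rpow_nonneg (by linarith [hx.2]) _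
    simp [F, abs_of_pos hx.1, abs_of_nonneg h1x]
  have hseries : ∀ x : ℝ, ∑' m, F m x = Real.exp (γ * x) * (1 - x) ^ (s - 1) := by
    intro x
    rw [Real.exp_eq_exp_ℝ, ← ((NormedSpace.expSeries_div_hasSum_exp (γ * x)).mul_right
      ((1 - x) ^ (s - 1))).tsum_eq]
    exact tsum_congr fun m => by simp only [F]; ring
  have := hasSum_integral_of_summable_integral_norm hint
    (by simpa only [hnorm] using summable_pow_div_pochR |γ| hs)
  simpa only [F, hF, hseries] using this

theorem hasSum_pow_succ_div_mul_sub_pochR (γ : ℝ) {s : ℝ} (hs : 0 < s) :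
    HasSum (fun m : ℕ => γ ^ (m + 1) / (m + 1) *
        (1 / pochR s (m + 1) - 1 / pochR (s + 1) (m + 1)))
      ((∫ x in Set.Ioo (0 : ℝ) 1, Real.exp (γ * x) * (1 - x) ^ (s - 1)) - 1 / s) := by
  have h := (hasSum_nat_add_iff' 1).mpr (hasSum_integral_Ioo_exp_mul_one_sub_rpow γ hs)
  simp only [range_one, sum_singleton, pow_zero, zero_add, pochR_one] at h
  refine h.congr_fun fun m => ?_
  rw [one_div_pochR_sub_one_div_pochR_add_one hs]
  field_simp

theorem sum_choose_mul_pow_mul_one_sub_pow_of_ne_zero {R : Type*} [CommRing R] [IsDomain R]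
    (n : ℕ) {x : R} (hx : x ≠ 0) :
    ∑ k ∈ Icc 1 n, (n.choose k : R) * (x ^ (k - 1) * (1 - x) ^ (n - k)) =
      ∑ j ∈ range n, (1 - x) ^ j := by
  have hbinom := add_pow x (1 - x) n
  rw [add_sub_cancel, one_pow, range_eq_Ico, sum_eq_sum_Ico_succ_bot (show 0 < n + 1 by omega),
    zero_add, Ico_add_one_right_eq_Icc] at hbinom
  have hgeom := geom_sum_mul_neg (1 - x) n
  rw [sub_sub_cancel] at hgeom
  have hshift : ∀ k ∈ Icc 1 n, x * ((n.choose k : R) * (x ^ (k - 1) * (1 - x) ^ (n - k))) =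
      x ^ k * (1 - x) ^ (n - k) * n.choose k := fun k hk => by
    obtain ⟨j, rfl⟩ := Nat.exists_eq_add_of_le' (mem_Icc.mp hk).1
    rw [Nat.add_sub_cancel]
    ring
  refine mul_left_cancel₀ hx ?_
  rw [mul_sum, sum_congr rfl hshift, mul_comm x, hgeom]
  simp only [pow_zero, Nat.sub_zero, Nat.choose_zero_right, Nat.cast_one, one_mul, mul_one]
    at hbinom
  linear_combination -hbinom

-- Clearing the factor `x` needs a domain; evaluating the identity in `ℤ[X]` removes that need.
theorem sum_choose_mul_pow_mul_one_sub_pow {R : Type*} [CommRing R] (n : ℕ) (x : R) :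
    ∑ k ∈ Icc 1 n, (n.choose k : R) * (x ^ (k - 1) * (1 - x) ^ (n - k)) =
      ∑ j ∈ range n, (1 - x) ^ j := by
  simpa using congrArg (aeval x)
    (sum_choose_mul_pow_mul_one_sub_pow_of_ne_zero (R := ℤ[X]) n X_ne_zero)

theorem sum_choose_mul_pow_mul_one_sub_rpow (n : ℕ) {x : ℝ} (hx : x < 1) (ρ : ℝ) :
    ∑ k ∈ Icc 1 n, (n.choose k : ℝ) * (x ^ (k - 1) * (1 - x) ^ ((n : ℝ) - k - 1 + ρ)) =
      ∑ j ∈ range n, (1 - x) ^ ((j : ℝ) + ρ - 1) := by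
  have h1x : 1 - x ≠ 0 := by linarith
  have hsplit (j : ℕ) : (1 - x) ^ ((j : ℝ) + ρ - 1) = (1 - x) ^ (ρ - 1) * (1 - x) ^ j := by
    rw [← Real.rpow_add_natCast h1x]; ring_nf
  have hterm : ∀ k ∈ Icc 1 n,
      (n.choose k : ℝ) * (x ^ (k - 1) * (1 - x) ^ ((n : ℝ) - k - 1 + ρ)) =
        (1 - x) ^ (ρ - 1) * ((n.choose k : ℝ) * (x ^ (k - 1) * (1 - x) ^ (n - k))) := by
    intro k hk
    have hexp : (n : ℝ) - k - 1 + ρ = ((n - k : ℕ) : ℝ) + ρ - 1 := by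
      rw [Nat.cast_sub (mem_Icc.mp hk).2]; ring
    rw [hexp, hsplit]
    ring
  rw [sum_congr rfl hterm, ← mul_sum, sum_choose_mul_pow_mul_one_sub_pow, mul_sum]
  exact sum_congr rfl fun j _ => (hsplit j).symm

theorem sum_choose_mul_integral_Ioo (n : ℕ) {φ : ℝ → ℝ}
    (hφ : ContinuousOn φ (Set.Icc 0 1)) {ρ : ℝ} (hρ : 0 < ρ) :
    ∑ k ∈ Icc 1 n, (n.choose k : ℝ) *
        ∫ x in Set.Ioo (0 : ℝ) 1, φ x * x ^ (k - 1) * (1 - x) ^ ((n : ℝ) - k - 1 + ρ) =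
      ∑ j ∈ range n, ∫ x in Set.Ioo (0 : ℝ) 1, φ x * (1 - x) ^ ((j : ℝ) + ρ - 1) := by
  simp_rw [← integral_const_mul]
  rw [← integral_finsetSum, ← integral_finsetSum]
  · refine setIntegral_congr_fun measurableSet_Ioo fun x hx => ?_
    rw [← mul_sum, ← sum_choose_mul_pow_mul_one_sub_rpow n hx.2 ρ, mul_sum]
    exact sum_congr rfl fun k _ => by ring
  · exact fun j _ =>
      integrableOn_Ioo_mul_one_sub_rpow hφ (by linarith [j.cast_nonneg (α := ℝ)])
  · intro k hk
    have hkn : (k : ℝ) ≤ n := by exact_mod_cast (mem_Icc.mp hk).2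
    refine (integrableOn_Ioo_mul_one_sub_rpow (hφ.mul (continuousOn_pow _)) ?_).const_mul _
    linarith

theorem expected_pangenome_size_general
    (n : ℕ) (θ ρ γ : ℝ) (hρ : 0 < ρ) :
    ∑ k ∈ Finset.Icc 1 n,
        (n.choose k : ℝ) *
          ∫ x in Set.Ioo (0 : ℝ) 1,
            θ * Real.exp (γ * x) * x ^ (k - 1) * (1 - x) ^ ((n : ℝ) - k - 1 + ρ) =
      θ * ∑ k ∈ Finset.range n, 1 / ((k : ℝ) + ρ) +
        θ * ∑' m : ℕ,
          γ ^ (m + 1) / (m + 1) *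
            (1 / pochR ρ (m + 1) - 1 / pochR ((n : ℝ) + ρ) (m + 1)) := by
  set I : ℕ → ℝ := fun j =>
    ∫ x in Set.Ioo (0 : ℝ) 1, Real.exp (γ * x) * (1 - x) ^ ((j : ℝ) + ρ - 1)
  have hstep (j : ℕ) : HasSum (fun m : ℕ => γ ^ (m + 1) / (m + 1) *
      (1 / pochR (j + ρ) (m + 1) - 1 / pochR ((j + 1 : ℕ) + ρ) (m + 1)))
      (I j - 1 / (j + ρ)) := by
    convert hasSum_pow_succ_div_mul_sub_pochR γ (s := j + ρ) (by positivity) using 5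
    rw [Nat.cast_succ, add_right_comm]
  have htel : HasSum (fun m : ℕ => γ ^ (m + 1) / (m + 1) *
      (1 / pochR ρ (m + 1) - 1 / pochR ((n : ℝ) + ρ) (m + 1)))
      (∑ j ∈ range n, (I j - 1 / (j + ρ))) := by
    refine (hasSum_sum fun j _ => hstep j).congr_fun fun m => ?_
    rw [← mul_sum, sum_range_sub' (fun j : ℕ => 1 / pochR (j + ρ) (m + 1))]
    simp only [Nat.cast_zero, zero_add]
  rw [sum_choose_mul_integral_Ioo n (φ := fun x => θ * Real.exp (γ * x)) (by fun_prop) hρ,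
    htel.tsum_eq]
  simp_rw [mul_assoc θ, integral_const_mul, ← mul_sum, sum_sub_distrib]
  ring

/-- Corollary 2, `E[G^{(n)}]`: for `n ≥ 1`, `θ > 0`, `ρ > 0`, `γ ≥ 0`,
`Σ_{k=1}^n C(n,k) ∫₀¹ θ e^{γx} x^{k-1} (1-x)^{n-k-1+ρ} dx
  = θ Σ_{k=0}^{n-1} 1/(k+ρ) + θ Σ_{m≥1} (γ^m/m)(1/(ρ)_m − 1/(n+ρ)_m)`. -/
theorem expected_pangenome_size
    (n : ℕ) (hn : 1 ≤ n) (θ ρ γ : ℝ) (hθ : 0 < θ) (hρ : 0 < ρ) (hγ : 0 ≤ γ) :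
    ∑ k ∈ Finset.Icc 1 n,
        (n.choose k : ℝ) *
          ∫ x in Set.Ioo (0 : ℝ) 1,
            θ * Real.exp (γ * x) * x ^ (k - 1) * (1 - x) ^ ((n : ℝ) - k - 1 + ρ) =
      θ * ∑ k ∈ Finset.range n, 1 / ((k : ℝ) + ρ) +
        θ * ∑' m : ℕ,
          γ ^ (m + 1) / (m + 1) *
            (1 / pochR ρ (m + 1) - 1 / pochR ((n : ℝ) + ρ) (m + 1)) :=
  expected_pangenome_size_general n θ ρ γ hρ
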